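/- Let 𝓕 be an analytic filter on ℕ and let X be a separable Banach space with an 𝓕-basis (e_n)_{n=1}^∞ with coordinate functionals (e_n*). Then each e_n* : X → 𝕂 is Borel-measurable: for every open U ⊆ 𝕂, the preimage (e_n*)^{-1}(U) is both analytic and coanalytic in X, and hence Borel by Souslin's theorem. -/

import Mathlib

open Filter Topology MeasureTheory TopologicalSpace

/-- A filter on ℕ (as a family of subsets): closed under finite intersections,
upwards-closed, and containing every cofinite set. -/
def IsFilterOnNat (F : Set (Set ℕ)) : Prop :=
  (∀ A ∈ F, ∀ B ∈ F, A ∩ B ∈ F) ∧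
  (∀ A ∈ F, ∀ B : Set ℕ, A ⊆ B → B ∈ F) ∧
  (∀ A : Set ℕ, Aᶜ.Finite → A ∈ F)

/-- `F`-convergence of a sequence `u` to `x` in a normed space. -/
def FLim {X : Type*} [SeminormedAddCommGroup X] (F : Set (Set ℕ)) (u : ℕ → X) (x : X) : Prop :=
  ∀ ε : ℝ, 0 < ε → ∃ A ∈ F, ∀ n ∈ A, ‖x - u n‖ < ε

/-- `(e n)` is an `F`-basis with coordinate functionals `coord`: for every `x` the partial sums
of `∑ coord x i • e i` `F`-converge to `x`, and the coefficient sequence is unique. -/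
def IsFBasis {𝕂 X : Type*} [RCLike 𝕂] [NormedAddCommGroup X] [NormedSpace 𝕂 X]
    (F : Set (Set ℕ)) (e : ℕ → X) (coord : X → ℕ → 𝕂) : Prop :=
  ∀ x : X, FLim F (fun m => ∑ i ∈ Finset.range m, coord x i • e i) x ∧
    ∀ b : ℕ → 𝕂, FLim F (fun m => ∑ i ∈ Finset.range m, b i • e i) x → b = coord x

/-- A family of subsets of ℕ viewed as a subset of the Cantor space `ℕ → Bool`. -/
def toCantor (F : Set (Set ℕ)) : Set (ℕ → Bool) := {f | {n | f n = true} ∈ F}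

/-- A family of subsets of ℕ is analytic if its copy in the Cantor space is an analytic set. -/
def IsAnalyticFamily (F : Set (Set ℕ)) : Prop := MeasureTheory.AnalyticSet (toCantor F)

/-- `A ⊆ ℕ` has asymptotic density one. -/
def HasDensityOne (A : Set ℕ) : Prop :=
  Filter.Tendsto
    (fun n : ℕ => (∑ i ∈ Finset.range n, Set.indicator A (fun _ => (1 : ℝ)) i) / n)
    Filter.atTop (nhds 1)

/-- The filter of statistical convergence: all subsets of ℕ of asymptotic density one. -/
def statFilter : Set (Set ℕ) := {A : Set ℕ | HasDensityOne A}

lemma analyticSet_inter' {α : Type*} [TopologicalSpace α] [T2Space α] {s t : Set α}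
    (hs : AnalyticSet s) (ht : AnalyticSet t) : AnalyticSet (s ∩ t) := by
  rw [Set.inter_eq_iInter]
  exact AnalyticSet.iInter (fun b => by cases b <;> simpa)

section Key
variable {𝕂 X : Type*} [RCLike 𝕂] [NormedAddCommGroup X] [NormedSpace 𝕂 X] [CompleteSpace X]
    [TopologicalSpace.SeparableSpace X]

lemma key_analytic
    (F : Set (Set ℕ)) (hFa : MeasureTheory.AnalyticSet (toCantor F))
    (e : ℕ → X) (coord : X → ℕ → 𝕂)
    (hbasis : ∀ x : X, (∀ ε : ℝ, 0 < ε → ∃ A ∈ F, ∀ m ∈ A,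
        ‖x - ∑ i ∈ Finset.range m, coord x i • e i‖ < ε) ∧
      ∀ b : ℕ → 𝕂, (∀ ε : ℝ, 0 < ε → ∃ A ∈ F, ∀ m ∈ A,
        ‖x - ∑ i ∈ Finset.range m, b i • e i‖ < ε) → b = coord x)
    (n : ℕ) (V : Set 𝕂) (hV : MeasurableSet[borel 𝕂] V) :
    AnalyticSet ((fun x => coord x n) ⁻¹' V) := by
  classical
  letI : MeasurableSpace 𝕂 := borel 𝕂
  haveI : BorelSpace 𝕂 := ⟨rfl⟩
  letI : MeasurableSpace X := borel X
  haveI : BorelSpace X := ⟨rfl⟩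
  haveI : PolishSpace (ℕ → Bool) := {}
  set S : Set (X × (ℕ → 𝕂)) :=
    {p | ∀ ε : ℝ, 0 < ε → ∃ A ∈ F, ∀ m ∈ A,
      ‖p.1 - ∑ i ∈ Finset.range m, p.2 i • e i‖ < ε} with hSdef
  -- Analyticity of S
  have hS : AnalyticSet S := by
    have hrepr : S = ⋂ k : ℕ, Prod.fst ''
        ((fun q : (X × (ℕ → 𝕂)) × (ℕ → Bool) => q.2) ⁻¹' toCantor F ∩
          {q : (X × (ℕ → 𝕂)) × (ℕ → Bool) | ∀ m : ℕ, q.2 m = true →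
            ‖q.1.1 - ∑ i ∈ Finset.range m, q.1.2 i • e i‖ < 1 / (k + 1)}) := by
      ext p
      simp only [hSdef, Set.mem_iInter, Set.mem_image, Set.mem_inter_iff, Set.mem_preimage,
        Set.mem_setOf_eq]
      constructor
      · intro hp k
        obtain ⟨A, hA, hAlt⟩ := hp (1 / (k + 1)) (by positivity)
        refine ⟨(p, fun m => decide (m ∈ A)), ⟨?_, ?_⟩, rfl⟩
        · have hset : {m | decide (m ∈ A) = true} = A := by ext m; simp
          show {m | (fun m => decide (m ∈ A)) m = true} ∈ F
          simpa [hset] using hA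
        · intro m hm
          exact hAlt m (by simpa using hm)
      · intro hp ε hε
        obtain ⟨k, hk⟩ := exists_nat_one_div_lt hε
        obtain ⟨q, ⟨hqF, hqlt⟩, hq1⟩ := hp k
        refine ⟨{m | q.2 m = true}, hqF, fun m hm => ?_⟩
        have := hqlt m hm
        rw [hq1] at this
        calc ‖p.1 - ∑ i ∈ Finset.range m, p.2 i • e i‖ < 1 / (k + 1) := this
          _ < ε := hk
    rw [hrepr]
    refine AnalyticSet.iInter (fun k => ?_)
    refine AnalyticSet.image_of_continuous ?_ continuous_fst
    refine analyticSet_inter' (hFa.preimage continuous_snd) ?_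
    have : MeasurableSet {q : (X × (ℕ → 𝕂)) × (ℕ → Bool) | ∀ m : ℕ, q.2 m = true →
        ‖q.1.1 - ∑ i ∈ Finset.range m, q.1.2 i • e i‖ < 1 / (k + 1)} := by
      have : {q : (X × (ℕ → 𝕂)) × (ℕ → Bool) | ∀ m : ℕ, q.2 m = true →
          ‖q.1.1 - ∑ i ∈ Finset.range m, q.1.2 i • e i‖ < 1 / (k + 1)} =
          ⋂ m : ℕ, ({q : (X × (ℕ → 𝕂)) × (ℕ → Bool) | q.2 m ≠ true} ∪
            {q | ‖q.1.1 - ∑ i ∈ Finset.range m, q.1.2 i • e i‖ < 1 / (k + 1)}) := by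
        ext q
        simp only [Set.mem_iInter, Set.mem_union, Set.mem_setOf_eq]
        exact forall_congr' fun m => by tauto
      rw [this]
      refine MeasurableSet.iInter (fun m => (IsOpen.union ?_ ?_).measurableSet)
      · have hc : Continuous fun q : (X × (ℕ → 𝕂)) × (ℕ → Bool) => q.2 m :=
          (continuous_apply m).comp continuous_snd
        exact (isOpen_discrete {b : Bool | b ≠ true}).preimage hc
      · have hc : Continuous fun q : (X × (ℕ → 𝕂)) × (ℕ → Bool) =>
            ‖q.1.1 - ∑ i ∈ Finset.range m, q.1.2 i • e i‖ := by
          refine (Continuous.sub (continuous_fst.comp continuous_fst) ?_).norm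
          exact continuous_finset_sum _ fun i _ =>
            (((continuous_apply i).comp (continuous_snd.comp continuous_fst)).smul
              continuous_const)
        exact isOpen_lt hc continuous_const
    exact this.analyticSet
  -- Reduction of the preimage to a projection of S
  have hrepr2 : (fun x => coord x n) ⁻¹' V =
      Prod.fst '' (S ∩ {p : X × (ℕ → 𝕂) | p.2 n ∈ V}) := by
    ext x
    constructor
    · intro hx
      exact ⟨(x, coord x), ⟨(hbasis x).1, hx⟩, rfl⟩
    · rintro ⟨p, ⟨hpS, hpV⟩, rfl⟩
      have h := (hbasis p.1).2 p.2 hpS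
      simpa [← h] using hpV
  rw [hrepr2]
  have hmeas : MeasurableSet {p : X × (ℕ → 𝕂) | p.2 n ∈ V} :=
    ((continuous_apply n).comp continuous_snd).measurable hV
  exact (analyticSet_inter' hS hmeas.analyticSet).image_of_continuous continuous_fst

end Key
/-- For an analytic filter `F` and an `F`-basis of a separable Banach space,
each coordinate functional is Borel-measurable: the preimage of every open set is both
analytic and coanalytic, hence Borel. -/
theorem borel_measurable_coord
    {𝕂 X : Type*} [RCLike 𝕂] [NormedAddCommGroup X] [NormedSpace 𝕂 X] [CompleteSpace X]
    [SeparableSpace X]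
    (F : Set (Set ℕ)) (hF : IsFilterOnNat F) (hFa : IsAnalyticFamily F)
    (e : ℕ → X) (coord : X → ℕ → 𝕂) (hbasis : IsFBasis F e coord) :
    ∀ (n : ℕ) (U : Set 𝕂), IsOpen U →
      MeasureTheory.AnalyticSet ((fun x => coord x n) ⁻¹' U) ∧
      MeasureTheory.AnalyticSet ((fun x => coord x n) ⁻¹' U)ᶜ ∧
      MeasurableSet[borel X] ((fun x => coord x n) ⁻¹' U) := by
  intro n U hU
  letI : MeasurableSpace 𝕂 := borel 𝕂
  haveI : BorelSpace 𝕂 := ⟨rfl⟩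
  have h1 := key_analytic F hFa e coord hbasis n U hU.measurableSet
  have h2 := key_analytic F hFa e coord hbasis n Uᶜ hU.measurableSet.compl
  rw [Set.preimage_compl] at h2
  refine ⟨h1, h2, ?_⟩
  letI : MeasurableSpace X := borel X
  haveI : BorelSpace X := ⟨rfl⟩
  exact h1.measurableSet_of_compl h2
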